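/- For every k ∈ ℕ with k ≥ 1, every real x > 0, and every h ∈ ℂ with Re(h) > 1, the defining series of L_q^h(s, χ | x) converge at s = 1 − k and L_q^h(1−k, χ | x) = − β_{k,χ,q}^h(x) / k. -/

import Mathlib

/-!
At `s = 1 - k` the powers `[x+m]_q^{-s}` are polynomials in `q^{x+m}`, so the binomial theorem
turns both defining series into finite combinations of the twisted geometric series
`∑_m χ(m) R_l^m` with `R_l = q^{l+h-1}`; periodicity of `χ` sums these to
`(∑_{a<f} χ(a) R_l^a) / (1 - R_l^f)`, and `Re h > 1` makes them converge.
Unfolding `β_{k,χ,q}^h(x)` through `[f]_q = (1-q^f)/(1-q)` and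
`(q^f)^{l(x+a)/f} = q^{lx} q^{la}` gives the same combination with coefficients `l + h - 1`:
the part `h - 1` comes from the first series, and the part `l` from the second one by the
absorption identity `l·C(k,l) = k·C(k-1,l-1)`.
-/

open Complex Finset Filter

/-- Complex power `q^z := exp(z·log q)` for a real base `q`. -/
noncomputable def qcpow (q : ℝ) (z : ℂ) : ℂ := Complex.exp (z * (Real.log q : ℂ))

/-- The complex `q`-number `[z]_q = (1 - q^z)/(1 - q)`. -/
noncomputable def qnum (q : ℝ) (z : ℂ) : ℂ := (1 - qcpow q z) / (1 - (q : ℂ))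

/-- The real `q`-number `[y]_q = (1 - q^y)/(1 - q)` for real `y`. -/
noncomputable def qnumR (q : ℝ) (y : ℝ) : ℝ := (1 - Real.exp (y * Real.log q)) / (1 - q)

/-- The `(h,q)`-Bernoulli polynomial
`β_{n,q}^h(x) = (1-q)^{-n} ∑_{l=0}^{n} C(n,l) (-1)^l q^{lx} (l+h-1)/[l+h-1]_q`. -/
noncomputable def qbeta (q : ℝ) (h : ℂ) (n : ℕ) (x : ℝ) : ℂ :=
  (1 - (q : ℂ))⁻¹ ^ n * ∑ l ∈ Finset.range (n + 1),
    (n.choose l : ℂ) * (-1) ^ l * qcpow q ((l : ℂ) * (x : ℂ)) *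
      (((l : ℂ) + h - 1) / qnum q ((l : ℂ) + h - 1))

/-- The generalized `(h,q)`-Bernoulli polynomial attached to a Dirichlet character `χ` mod `f`:
`β_{n,χ,q}^h(x) = [f]_q^{n-1} ∑_{a=0}^{f-1} χ(a) q^{(h-1)a} β_{n,q^f}^h((x+a)/f)`. -/
noncomputable def qbetaChi (q : ℝ) (h : ℂ) (f : ℕ) (χ : DirichletCharacter ℂ f)
    (n : ℕ) (x : ℝ) : ℂ :=
  qnum q (f : ℂ) ^ ((n : ℤ) - 1) * ∑ a ∈ Finset.range f,
    χ (a : ZMod f) * qcpow q ((h - 1) * (a : ℂ)) * qbeta (q ^ f) h n ((x + a) / f)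

/-- The Hurwitz-type `(h,q)`-`L`-function
`L_q^h(s, χ | x) = ((h-1)(1-q)/(s-1)) ∑ q^{(h-1)m} χ(m)/[x+m]_q^{s-1}
  + ∑ q^{hm+x} χ(m)/[x+m]_q^s`. -/
noncomputable def hqLH (q : ℝ) (h s : ℂ) (f : ℕ) (χ : DirichletCharacter ℂ f) (x : ℝ) : ℂ :=
  ((h - 1) * (1 - (q : ℂ)) / (s - 1)) *
    (∑' m : ℕ, qcpow q ((h - 1) * (m : ℂ)) * χ (m : ZMod f) /
      Complex.exp ((s - 1) * (Real.log (qnumR q (x + m)) : ℂ))) +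
  ∑' m : ℕ, qcpow q (h * (m : ℂ) + (x : ℂ)) * χ (m : ZMod f) /
    Complex.exp (s * (Real.log (qnumR q (x + m)) : ℂ))

/-- The Dirichlet-type `(h,q)`-`L`-function
`L_q^h(s, χ) = ((h-1)(1-q)/(s-1)) ∑_{m≥1} q^{(h-1)m} χ(m)/[m]_q^{s-1}
  + ∑_{m≥1} q^{hm} χ(m)/[m]_q^s`. -/
noncomputable def hqL (q : ℝ) (h s : ℂ) (f : ℕ) (χ : DirichletCharacter ℂ f) : ℂ :=
  ((h - 1) * (1 - (q : ℂ)) / (s - 1)) *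
    (∑' m : ℕ, qcpow q ((h - 1) * ((m : ℂ) + 1)) * χ ((m + 1 : ℕ) : ZMod f) /
      Complex.exp ((s - 1) * (Real.log (qnumR q ((m : ℝ) + 1)) : ℂ))) +
  ∑' m : ℕ, qcpow q (h * ((m : ℂ) + 1)) * χ ((m + 1 : ℕ) : ZMod f) /
    Complex.exp (s * (Real.log (qnumR q ((m : ℝ) + 1)) : ℂ))

lemma qcpow_add (q : ℝ) (z w : ℂ) : qcpow q (z + w) = qcpow q z * qcpow q w := by
  simp only [qcpow, add_mul, Complex.exp_add]

lemma qcpow_natCast_mul (q : ℝ) (n : ℕ) (z : ℂ) : qcpow q (n * z) = qcpow q z ^ n := by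
  rw [qcpow, qcpow, mul_assoc, Complex.exp_nat_mul]

lemma qcpow_ofReal (q y : ℝ) : qcpow q y = Real.exp (y * Real.log q) := by
  rw [qcpow, ← Complex.ofReal_mul, Complex.ofReal_exp]

lemma qcpow_natCast {q : ℝ} (hq0 : 0 < q) (n : ℕ) : qcpow q n = (q : ℂ) ^ n := by
  rw [← Complex.ofReal_natCast, qcpow_ofReal, ← Real.log_pow, Real.exp_log (by positivity)]
  push_cast
  rfl

lemma qcpow_pow (q : ℝ) (f : ℕ) (z : ℂ) : qcpow (q ^ f) z = qcpow q (f * z) := by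
  simp only [qcpow, Real.log_pow]
  push_cast
  ring_nf

lemma norm_qcpow_lt_one {q : ℝ} (hq0 : 0 < q) (hq1 : q < 1) {z : ℂ} (hz : 0 < z.re) :
    ‖qcpow q z‖ < 1 := by
  rw [qcpow, Complex.norm_exp, Real.exp_lt_one_iff]
  simpa [Complex.mul_re] using mul_neg_of_pos_of_neg hz (Real.log_neg hq0 hq1)

lemma qnum_pow (q : ℝ) (f : ℕ) (z : ℂ) :
    qnum (q ^ f) z = (1 - qcpow q z ^ f) / (1 - (q : ℂ) ^ f) := by
  rw [qnum, qcpow_pow, qcpow_natCast_mul]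
  push_cast
  rfl

lemma qnum_natCast {q : ℝ} (hq0 : 0 < q) (f : ℕ) : qnum q f = (1 - (q : ℂ) ^ f) / (1 - q) := by
  rw [qnum, qcpow_natCast hq0]

lemma qnumR_pos {q : ℝ} (hq0 : 0 < q) (hq1 : q < 1) {y : ℝ} (hy : 0 < y) : 0 < qnumR q y := by
  have : Real.exp (y * Real.log q) < 1 :=
    Real.exp_lt_one_iff.2 (mul_neg_of_pos_of_neg hy (Real.log_neg hq0 hq1))
  exact div_pos (by linarith) (by linarith)

lemma ofReal_qnumR (q y : ℝ) : (qnumR q y : ℂ) = (1 - (q : ℂ))⁻¹ * (1 - qcpow q y) := by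
  rw [qnumR, qcpow_ofReal]
  push_cast
  ring

/-- `∑_{m ≥ 0} c m r^m` for `c` of period `f`, summed one period at a time. -/
noncomputable def periodicGeomSum {K : Type*} [Field K] (c : ℕ → K) (f : ℕ) (r : K) : K :=
  (∑ a ∈ range f, c a * r ^ a) / (1 - r ^ f)

lemma hasSum_periodic_mul_geometric {K : Type*} [NormedField K] {c : ℕ → K} {f : ℕ}
    (hc : Function.Periodic c f) {r : K} (hr : r ^ f ≠ 1)
    (hs : Summable fun m => c m * r ^ m) :
    HasSum (fun m => c m * r ^ m) (periodicGeomSum c f r) := by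
  obtain ⟨T, hT⟩ := hs
  have hshift : HasSum (fun m => c (m + f) * r ^ (m + f)) (r ^ f * T) := by
    simpa only [hc _, pow_add, mul_comm, mul_left_comm] using hT.mul_left (r ^ f)
  have hT' : T = r ^ f * T + ∑ a ∈ range f, c a * r ^ a :=
    hT.unique ((hasSum_nat_add_iff f).1 hshift)
  convert hT using 1
  rw [periodicGeomSum, div_eq_iff (sub_ne_zero.2 (Ne.symm hr))]
  linear_combination -hT'

lemma DirichletCharacter.hasSum_mul_geometric {f : ℕ} (hf : f ≠ 0) (χ : DirichletCharacter ℂ f)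
    {r : ℂ} (hr : ‖r‖ < 1) :
    HasSum (fun m : ℕ => χ m * r ^ m) (periodicGeomSum (fun m : ℕ => χ m) f r) := by
  refine hasSum_periodic_mul_geometric (fun m => by simp) ?_ ?_
  · intro h1
    have := pow_lt_one₀ (norm_nonneg r) hr hf
    rw [← norm_pow, h1, norm_one] at this
    exact this.false
  · refine Summable.of_norm_bounded (summable_geometric_of_lt_one (norm_nonneg r) hr) fun m => ?_
    rw [norm_mul, norm_pow]
    exact mul_le_of_le_one_left (by positivity) (χ.norm_le_one _)

lemma qcpow_mul_qcpow_pow (q : ℝ) (w : ℂ) (x : ℝ) (m l : ℕ) :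
    qcpow q (w * m) * qcpow q ((x + m : ℝ) : ℂ) ^ l = qcpow q (l * x) * qcpow q (l + w) ^ m := by
  rw [← qcpow_natCast_mul, ← qcpow_natCast_mul, ← qcpow_add, ← qcpow_add]
  push_cast
  ring_nf

lemma hasSum_qcpow_mul_char_mul_qnumR_pow {q : ℝ} (hq0 : 0 < q) (hq1 : q < 1) {f : ℕ}
    (hf : f ≠ 0) (χ : DirichletCharacter ℂ f) {w : ℂ} (hw : 0 < w.re) (n : ℕ) (x : ℝ) :
    HasSum (fun m : ℕ => qcpow q (w * m) * χ m * (qnumR q (x + m) : ℂ) ^ n)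
      ((1 - (q : ℂ))⁻¹ ^ n * ∑ l ∈ range (n + 1), (n.choose l : ℂ) * (-1) ^ l *
        qcpow q (l * x) * periodicGeomSum (fun m : ℕ => χ m) f (qcpow q (l + w))) := by
  have hterm : ∀ m : ℕ, qcpow q (w * m) * χ m * (qnumR q (x + m) : ℂ) ^ n =
      (1 - (q : ℂ))⁻¹ ^ n * ∑ l ∈ range (n + 1), (n.choose l : ℂ) * (-1) ^ l * qcpow q (l * x) *
        (χ m * qcpow q (l + w) ^ m) := by
    intro m
    rw [ofReal_qnumR, mul_pow, sub_eq_neg_add 1 (qcpow q _), add_pow, mul_sum, mul_sum, mul_sum]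
    refine sum_congr rfl fun l _ => ?_
    rw [one_pow, mul_one, neg_pow]
    linear_combination (1 - (q : ℂ))⁻¹ ^ n * (n.choose l : ℂ) * (-1) ^ l * χ m *
      qcpow_mul_qcpow_pow q w x m l
  have hgeom : ∀ l : ℕ, HasSum (fun m : ℕ => χ m * qcpow q (l + w) ^ m)
      (periodicGeomSum (fun m : ℕ => χ m) f (qcpow q (l + w))) := fun l =>
    χ.hasSum_mul_geometric hf (norm_qcpow_lt_one hq0 hq1
      (by rw [Complex.add_re, Complex.natCast_re]; positivity))
  rw [funext hterm]
  exact (hasSum_sum fun l _ => (hgeom l).mul_left _).mul_left _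

lemma qbeta_pow_div {q : ℝ} {f : ℕ} (hf : f ≠ 0) (h : ℂ) (N : ℕ) (x a : ℝ) :
    qbeta (q ^ f) h N ((x + a) / f) = (1 - (q : ℂ) ^ f)⁻¹ ^ N * ∑ l ∈ range (N + 1),
      (N.choose l : ℂ) * (-1) ^ l * qcpow q (l * x) * qcpow q (l * a) *
        ((l + h - 1) * (1 - (q : ℂ) ^ f) / (1 - qcpow q (l + h - 1) ^ f)) := by
  rw [qbeta]
  push_cast
  refine congrArg _ (sum_congr rfl fun l _ => ?_)
  have hexp : (f : ℂ) * (l * ((x + a) / f)) = l * x + l * a := by field_simp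
  rw [qcpow_pow, qnum_pow, div_div_eq_mul_div, hexp, qcpow_add]
  ring

lemma qbetaChi_succ {q : ℝ} (hq0 : 0 < q) (hq1 : q < 1) (h : ℂ) {f : ℕ} (hf : f ≠ 0)
    (χ : DirichletCharacter ℂ f) (n : ℕ) (x : ℝ) :
    qbetaChi q h f χ (n + 1) x = (1 - (q : ℂ))⁻¹ ^ n * ∑ l ∈ range (n + 2),
      (n + 1).choose l * (-1) ^ l * qcpow q (l * x) *
        ((l + (h - 1)) * periodicGeomSum (fun m : ℕ => χ m) f (qcpow q (l + (h - 1)))) := by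
  have hqf : 1 - (q : ℂ) ^ f ≠ 0 :=
    sub_ne_zero.2 (by exact_mod_cast (pow_lt_one₀ hq0.le hq1 hf).ne')
  have hR : ∀ l a : ℕ, qcpow q ((h - 1) * a) * qcpow q (l * a) = qcpow q (l + (h - 1)) ^ a :=
    fun l a => by rw [← qcpow_add, ← qcpow_natCast_mul]; ring_nf
  have hcoef : ((1 - (q : ℂ) ^ f) / (1 - q)) ^ n * (1 - (q : ℂ) ^ f)⁻¹ ^ (n + 1) *
      (1 - (q : ℂ) ^ f) = (1 - (q : ℂ))⁻¹ ^ n := by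
    rw [div_eq_mul_inv, mul_pow, pow_succ, inv_pow, inv_pow]
    field_simp
  rw [qbetaChi, qnum_natCast hq0, show ((n + 1 : ℕ) : ℤ) - 1 = n by push_cast; ring, zpow_natCast]
  simp_rw [qbeta_pow_div hf, periodicGeomSum, mul_sum, sum_div, mul_sum, Complex.ofReal_natCast,
    add_sub_assoc]
  rw [sum_comm]
  refine sum_congr rfl fun l _ => sum_congr rfl fun a _ => ?_
  rw [← hR l a]
  linear_combination ((n + 1).choose l * (-1) ^ l * qcpow q (l * x) * (l + (h - 1)) * χ a *
    qcpow q ((h - 1) * a) * qcpow q (l * a) / (1 - qcpow q (l + (h - 1)) ^ f)) * hcoef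

lemma sum_range_natCast_mul_choose_mul {R : Type*} [CommSemiring R] (n : ℕ) (g : ℕ → R) :
    ∑ l ∈ range (n + 2), (l : R) * (n + 1).choose l * g l =
      (n + 1) * ∑ j ∈ range (n + 1), (n.choose j : R) * g (j + 1) := by
  rw [sum_range_succ', mul_sum]
  simp only [Nat.cast_zero, zero_mul, add_zero]
  refine sum_congr rfl fun j _ => ?_
  have habs : ((n : R) + 1) * n.choose j = (n + 1).choose (j + 1) * (j + 1) := by
    exact_mod_cast congrArg (Nat.cast : ℕ → R) (Nat.add_one_mul_choose_eq n j)
  push_cast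
  rw [← mul_assoc, habs]
  ring

lemma div_exp_neg_natCast_mul_log (a : ℂ) (n : ℕ) {u : ℝ} (hu : 0 < u) :
    a / Complex.exp (-(n : ℂ) * (Real.log u : ℂ)) = a * (u : ℂ) ^ n := by
  rw [neg_mul, Complex.exp_neg, Complex.exp_nat_mul, ← Complex.ofReal_exp, Real.exp_log hu,
    div_inv_eq_mul]

/-- The absorption identity `l·C(n+1,l) = (n+1)·C(n,l-1)` moves the factor `q^x` into the sum. -/
lemma hasSum_qcpow_add_mul_char_mul_qnumR_pow {q : ℝ} (hq0 : 0 < q) (hq1 : q < 1) {f : ℕ}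
    (hf : f ≠ 0) (χ : DirichletCharacter ℂ f) {h : ℂ} (hh : 0 < h.re) (n : ℕ) (x : ℝ) :
    HasSum (fun m : ℕ => qcpow q (h * m + x) * χ m * (qnumR q (x + m) : ℂ) ^ n)
      (-(1 - (q : ℂ))⁻¹ ^ n / (n + 1) * ∑ l ∈ range (n + 2), ((n + 1).choose l : ℂ) * (-1) ^ l *
        qcpow q (l * x) * (l * periodicGeomSum (fun m : ℕ => χ m) f (qcpow q (l + (h - 1))))) := by
  set G : ℕ → ℂ := fun l => periodicGeomSum (fun m : ℕ => χ m) f (qcpow q (l + (h - 1)))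
  have hsum : ∑ l ∈ range (n + 2), ((n + 1).choose l : ℂ) * (-1) ^ l * qcpow q (l * x) * (l * G l) =
      -((n + 1) * (qcpow q x * ∑ j ∈ range (n + 1), (n.choose j : ℂ) * (-1) ^ j *
        qcpow q (j * x) * periodicGeomSum (fun m : ℕ => χ m) f (qcpow q (j + h)))) := by
    have hshift : ∑ j ∈ range (n + 1),
          (n.choose j : ℂ) * ((-1) ^ (j + 1) * qcpow q ((j + 1 : ℕ) * x) * G (j + 1)) =
        -(qcpow q x * ∑ j ∈ range (n + 1), (n.choose j : ℂ) * (-1) ^ j *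
          qcpow q (j * x) * periodicGeomSum (fun m : ℕ => χ m) f (qcpow q (j + h))) := by
      rw [mul_sum, ← sum_neg_distrib]
      refine sum_congr rfl fun j _ => ?_
      rw [show ((j + 1 : ℕ) : ℂ) * x = x + j * x by push_cast; ring, qcpow_add,
        show (j : ℂ) + h = ((j + 1 : ℕ) : ℂ) + (h - 1) by push_cast; ring]
      ring
    calc _ = ∑ l ∈ range (n + 2), (l : ℂ) * (n + 1).choose l * ((-1) ^ l * qcpow q (l * x) * G l) :=
          sum_congr rfl fun l _ => by ring
      _ = (n + 1) * ∑ j ∈ range (n + 1),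
            (n.choose j : ℂ) * ((-1) ^ (j + 1) * qcpow q ((j + 1 : ℕ) * x) * G (j + 1)) :=
          sum_range_natCast_mul_choose_mul _ _
      _ = _ := by rw [hshift]; ring
  have hn : (n : ℂ) + 1 ≠ 0 := Nat.cast_add_one_ne_zero n
  rw [hsum, show ∀ c X S : ℂ, -c / (n + 1) * -((n + 1) * (X * S)) = X * (c * S) from
    fun c X S => by field_simp]
  exact ((hasSum_qcpow_mul_char_mul_qnumR_pow hq0 hq1 hf χ hh n x).mul_left (qcpow q x)).congr_fun
    fun m => by rw [qcpow_add]; ring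

/-- `L_q^h(1-k, χ | x) = -β_{k,χ,q}^h(x)/k` for `k ≥ 1`, with the
defining series converging at `s = 1-k`. -/
theorem hqLH_neg_nat (q : ℝ) (hq0 : 0 < q) (hq1 : q < 1)
    (h : ℂ) (hh : 1 < h.re) (f : ℕ) (hf : 1 ≤ f) (χ : DirichletCharacter ℂ f)
    (k : ℕ) (hk : 1 ≤ k) (x : ℝ) (hx : 0 < x) :
    Summable (fun m : ℕ => qcpow q ((h - 1) * (m : ℂ)) * χ (m : ZMod f) /
      Complex.exp (((1 - (k : ℂ)) - 1) * (Real.log (qnumR q (x + m)) : ℂ))) ∧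
    Summable (fun m : ℕ => qcpow q (h * (m : ℂ) + (x : ℂ)) * χ (m : ZMod f) /
      Complex.exp ((1 - (k : ℂ)) * (Real.log (qnumR q (x + m)) : ℂ))) ∧
    hqLH q h (1 - (k : ℂ)) f χ x = -qbetaChi q h f χ k x / (k : ℂ) := by
  obtain ⟨n, rfl⟩ : ∃ n, k = n + 1 := ⟨k - 1, by omega⟩
  have hf0 : f ≠ 0 := by omega
  have hu : ∀ m : ℕ, 0 < qnumR q (x + m) := fun m => qnumR_pos hq0 hq1 (by positivity)
  have HA := hasSum_qcpow_mul_char_mul_qnumR_pow hq0 hq1 hf0 χ (w := h - 1)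
    (by rw [Complex.sub_re, Complex.one_re]; linarith) (n + 1) x
  have HB := hasSum_qcpow_add_mul_char_mul_qnumR_pow hq0 hq1 hf0 χ (h := h) (by linarith) n x
  rw [hqLH, show (1 - ((n + 1 : ℕ) : ℂ)) - 1 = -((n + 1 : ℕ) : ℂ) by ring,
    show 1 - ((n + 1 : ℕ) : ℂ) = -(n : ℂ) by push_cast; ring]
  simp only [div_exp_neg_natCast_mul_log _ _ (hu _)]
  refine ⟨HA.summable, HB.summable, ?_⟩
  rw [HA.tsum_eq, HB.tsum_eq, qbetaChi_succ hq0 hq1 h hf0 χ n x]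
  have hq : 1 - (q : ℂ) ≠ 0 := by exact_mod_cast (sub_pos.2 hq1).ne'
  have hn : (n : ℂ) + 1 ≠ 0 := Nat.cast_add_one_ne_zero n
  have hcombine : ∀ A B C : ℂ, C = B + (h - 1) * A →
      (h - 1) * (1 - q) / -((n + 1 : ℕ) : ℂ) * ((1 - (q : ℂ))⁻¹ ^ (n + 1) * A) +
        -(1 - (q : ℂ))⁻¹ ^ n / (n + 1) * B = -((1 - (q : ℂ))⁻¹ ^ n * C) / (n + 1 : ℕ) := by
    rintro A B C rfl
    rw [pow_succ]
    push_cast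
    field_simp
    ring
  refine hcombine _ _ _ ?_
  rw [mul_sum, ← sum_add_distrib]
  exact sum_congr rfl fun l _ => by ring
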